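/- Let o ∈ ℝ^d and let ℐ be a family of (possibly degenerate) compact closed segments I ⊆ ℝ^d such that each I ∈ ℐ satisfies I ⊆ r_I \ {o} for some closed ray r_I emanating from o. Suppose that for every subfamily 𝒦 ⊆ ℐ with at most d + 1 elements there exists an affine hyperplane H ⊆ ℝ^d with o ∉ H intersecting every segment I ∈ 𝒦. Then there exists an affine hyperplane H ⊆ ℝ^d with o ∉ H that intersects every segment I ∈ ℐ. -/

import Mathlib

open Set

noncomputable section

/-- Euclidean space `ℝ^n`. -/
abbrev E (n : ℕ) := EuclideanSpace ℝ (Fin n)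

/-- A convex body of `ℝ^n`: a compact convex subset (possibly empty). -/
def IsBody {n : ℕ} (C : Set (E n)) : Prop := Convex ℝ C ∧ IsCompact C

/-- `Φ` represents a lattice homomorphism from `𝒞(ℝ^c)` to `𝒞(ℝ^d)`: it maps convex bodies
to convex bodies, and on convex bodies it preserves intersections (the lattice meet) and
convex hulls of unions (the lattice join). -/
def IsLatHom {c d : ℕ} (Φ : Set (E c) → Set (E d)) : Prop :=
  (∀ C, IsBody C → IsBody (Φ C)) ∧
  ∀ C D : Set (E c), IsBody C → IsBody D →
    Φ (C ∩ D) = Φ C ∩ Φ D ∧ Φ (convexHull ℝ (C ∪ D)) = convexHull ℝ (Φ C ∪ Φ D)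

/-- `Φ` is non-trivial: it is not constant on convex bodies. -/
def NonTrivial {c d : ℕ} (Φ : Set (E c) → Set (E d)) : Prop :=
  ∃ C D : Set (E c), IsBody C ∧ IsBody D ∧ Φ C ≠ Φ D

/-- The closed ray emanating from `o` in direction `u`. -/
def Ray {n : ℕ} (o u : E n) : Set (E n) := {p | ∃ t : ℝ, 0 ≤ t ∧ p = o + t • u}

/-- An affine hyperplane of `ℝ^n`: a nonempty affine subspace of dimension `n - 1`. -/
def IsHyperplane {n : ℕ} (H : AffineSubspace ℝ (E n)) : Prop :=
  (H : Set (E n)).Nonempty ∧ Module.finrank ℝ H.direction + 1 = n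

open scoped Classical in
/-- The dimension of a convex set: the dimension of its affine hull, with `sdim ∅ = -1`. -/
def sdim {n : ℕ} (s : Set (E n)) : ℤ :=
  if s = ∅ then -1 else Module.finrank ℝ (affineSpan ℝ s).direction

/-! A hyperplane avoiding `o` is `{x | ⟪y, x - o⟫ = 1}` for some `y ≠ 0`, and a segment
`o + [m, M] • u` with `0 < m` meets it iff `⟪u, y⟫ ∈ [M⁻¹, m⁻¹]`. So the transversals of the family
are the points `y` of an intersection of slabs, and Helly's theorem in the space of `y`'s handles
finite subfamilies. For the whole family, project orthogonally onto the span of the directions `u`: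
this keeps `y` in every slab, and inside that span the slabs of finitely many spanning directions
cut out a compact set, so the finite intersection property gives a common point. Such a hyperplane
meets each ray from `o` at most once, hence each segment in exactly one point. -/

open Submodule
open scoped RealInnerProductSpace

section DualHyperplane

variable {V : Type*} [NormedAddCommGroup V] [InnerProductSpace ℝ V]

def dualHyperplane (o y : V) : AffineSubspace ℝ V where
  carrier := {x | ⟪y, x - o⟫ = 1}
  smul_vsub_vadd_mem' c p₁ p₂ p₃ h₁ h₂ h₃ := by
    simp only [mem_ofPred_eq, vsub_eq_sub, vadd_eq_add] at *
    rw [add_sub_assoc, inner_add_right, inner_smul_right, h₃,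
      ← sub_sub_sub_cancel_right p₁ p₂ o, inner_sub_right, h₁, h₂]
    ring

theorem mem_dualHyperplane {o y x : V} : x ∈ dualHyperplane o y ↔ ⟪y, x - o⟫ = 1 := Iff.rfl

theorem self_notMem_dualHyperplane (o y : V) : o ∉ dualHyperplane o y := by
  simp [mem_dualHyperplane]

theorem dualHyperplane_nonempty (o : V) {y : V} (hy : y ≠ 0) :
    (dualHyperplane o y : Set V).Nonempty := by
  refine ⟨o + (‖y‖ ^ 2)⁻¹ • y, ?_⟩
  rw [SetLike.mem_coe, mem_dualHyperplane, add_sub_cancel_left, inner_smul_right,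
    real_inner_self_eq_norm_sq, inv_mul_cancel₀ (by positivity)]

theorem direction_dualHyperplane (o : V) {y : V} (hy : y ≠ 0) :
    (dualHyperplane o y).direction = (ℝ ∙ y)ᗮ := by
  obtain ⟨p, hp⟩ := dualHyperplane_nonempty o hy
  ext v
  rw [← AffineSubspace.vadd_mem_iff_mem_direction v hp, mem_orthogonal_singleton_iff_inner_right]
  rw [SetLike.mem_coe, mem_dualHyperplane] at hp
  rw [mem_dualHyperplane, vadd_eq_add, add_sub_assoc, inner_add_right, hp, add_eq_right]

theorem finrank_direction_dualHyperplane [FiniteDimensional ℝ V] (o : V) {y : V} (hy : y ≠ 0) :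
    Module.finrank ℝ (dualHyperplane o y).direction + 1 = Module.finrank ℝ V := by
  rw [direction_dualHyperplane o hy, ← finrank_span_singleton (K := ℝ) hy, add_comm,
    finrank_add_finrank_orthogonal]

theorem exists_le_dualHyperplane [FiniteDimensional ℝ V] {o : V} {H : AffineSubspace ℝ V}
    (hH : (H : Set V).Nonempty) (ho : o ∉ H) : ∃ y, H ≤ dualHyperplane o y := by
  obtain ⟨p, hp⟩ := hH
  have hv : p - o ∉ H.directionᗮᗮ := by
    rw [orthogonal_orthogonal]
    exact fun h ↦ ho ((AffineSubspace.vsub_left_mem_direction_iff_mem hp o).1 h)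
  obtain ⟨w, hw, hwv⟩ : ∃ w ∈ H.directionᗮ, ⟪w, p - o⟫ ≠ 0 := by
    by_contra! h
    exact hv ((mem_orthogonal _ _).2 h)
  refine ⟨⟪w, p - o⟫⁻¹ • w, fun x hx ↦ ?_⟩
  have hxp : ⟪w, x - p⟫ = 0 :=
    inner_left_of_mem_orthogonal (AffineSubspace.vsub_mem_direction hx hp) hw
  rw [mem_dualHyperplane, inner_smul_left, ← sub_add_sub_cancel x p o,
    inner_add_right, hxp, zero_add]
  exact inv_mul_cancel₀ hwv

end DualHyperplane

theorem exists_mem_Icc_mul_eq_one_iff {m M c : ℝ} (hm : 0 < m) (hmM : m ≤ M) :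
    (∃ r ∈ Icc m M, r * c = 1) ↔ c ∈ Icc M⁻¹ m⁻¹ := by
  constructor
  · rintro ⟨r, ⟨hmr, hrM⟩, hrc⟩
    rw [eq_inv_of_mul_eq_one_right hrc]
    exact ⟨inv_anti₀ (hm.trans_le hmr) hrM, inv_anti₀ hm hmr⟩
  · rintro ⟨hMc, hcm⟩
    have hM : 0 < M := hm.trans_le hmM
    have hc : 0 < c := (inv_pos.2 hM).trans_le hMc
    exact ⟨c⁻¹, ⟨(le_inv_comm₀ hm hc).2 hcm, (inv_le_comm₀ hc hM).2 hMc⟩, inv_mul_cancel₀ hc.ne'⟩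

section Euclidean

variable {n : ℕ}

theorem isHyperplane_dualHyperplane (o : E n) {y : E n} (hy : y ≠ 0) :
    IsHyperplane (dualHyperplane o y) :=
  ⟨dualHyperplane_nonempty o hy, by
    rw [finrank_direction_dualHyperplane o hy, finrank_euclideanSpace_fin]⟩

theorem subsingleton_ray_inter_dualHyperplane (o u y : E n) :
    (Ray o u ∩ dualHyperplane o y).Subsingleton := by
  rintro _ ⟨⟨r, -, rfl⟩, hr⟩ _ ⟨⟨s, -, rfl⟩, hs⟩
  rw [SetLike.mem_coe, mem_dualHyperplane, add_sub_cancel_left, inner_smul_right] at hr hs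
  rw [mul_right_cancel₀ (right_ne_zero_of_mul_eq_one hr) (hr.trans hs.symm)]

theorem exists_segment_eq_image_Icc_of_subset_ray {o u a b : E n}
    (h : segment ℝ a b ⊆ Ray o u \ {o}) :
    ∃ m M : ℝ, 0 < m ∧ m ≤ M ∧ segment ℝ a b = (fun r : ℝ ↦ o + r • u) '' Icc m M := by
  have hpos : ∀ p ∈ segment ℝ a b, ∃ t : ℝ, 0 < t ∧ p = o + t • u := by
    intro p hp
    obtain ⟨⟨t, ht, rfl⟩, hpo⟩ := h hp
    exact ⟨t, ht.lt_of_ne (by rintro rfl; simp at hpo), rfl⟩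
  obtain ⟨s, hs, rfl⟩ := hpos a (left_mem_segment ℝ a b)
  obtain ⟨t, ht, rfl⟩ := hpos _ (right_mem_segment ℝ _ b)
  refine ⟨s ⊓ t, s ⊔ t, lt_inf_iff.2 ⟨hs, ht⟩, inf_le_sup, ?_⟩
  rw [← uIcc, ← segment_eq_uIcc]
  have hline : (fun r : ℝ ↦ o + r • u) = AffineMap.lineMap o (o + u) := by
    ext1 r
    rw [AffineMap.lineMap_apply, vsub_eq_sub, add_sub_cancel_left, vadd_eq_add, add_comm]
  rw [hline, image_segment, ← hline]

theorem exists_Icc_segment_inter_dualHyperplane_nonempty_iff {o u a b : E n}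
    (h : segment ℝ a b ⊆ Ray o u \ {o}) :
    ∃ α β : ℝ, 0 < α ∧ ∀ y : E n,
      (segment ℝ a b ∩ dualHyperplane o y).Nonempty ↔ ⟪u, y⟫ ∈ Icc α β := by
  obtain ⟨m, M, hm, hmM, hI⟩ := exists_segment_eq_image_Icc_of_subset_ray h
  refine ⟨M⁻¹, m⁻¹, inv_pos.2 (hm.trans_le hmM), fun y ↦ ?_⟩
  rw [← exists_mem_Icc_mul_eq_one_iff hm hmM, hI, image_inter_nonempty_iff]
  simp only [Set.Nonempty, mem_inter_iff, mem_preimage, SetLike.mem_coe, mem_dualHyperplane,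
    add_sub_cancel_left, inner_smul_right, real_inner_comm u y]

end Euclidean

section Slabs

variable {ι V : Type*} [NormedAddCommGroup V] [InnerProductSpace ℝ V] [FiniteDimensional ℝ V]
  {u : ι → V} {K : ι → Set ℝ}

theorem exists_finset_span_image_eq_span_range (u : ι → V) :
    ∃ s : Finset ι, span ℝ (u '' s) = span ℝ (range u) := by
  classical
  obtain ⟨t, hts, -, hspan, -⟩ := exists_finset_span_eq_linearIndepOn ℝ (range u)
  rw [← image_univ, Finset.subset_set_image_iff] at hts
  obtain ⟨s, -, rfl⟩ := hts
  exact ⟨s, by rwa [Finset.coe_image] at hspan⟩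

theorem isCompact_setOf_forall_inner_mem {s : Finset ι} (hK : ∀ i, IsCompact (K i)) :
    IsCompact {w : span ℝ (u '' s) | ∀ i ∈ s, ⟪u i, (w : V)⟫ ∈ K i} := by
  set W := span ℝ (u '' s)
  let g : W →ₗ[ℝ] s → ℝ := LinearMap.pi fun i ↦ (innerₛₗ ℝ (u i)).comp W.subtype
  have hg : LinearMap.ker g = ⊥ := by
    refine (LinearMap.ker_eq_bot').2 fun w hw ↦ ?_
    have hWw : W ≤ (ℝ ∙ (w : V))ᗮ := by
      refine span_le.2 ?_
      rintro _ ⟨i, hi, rfl⟩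
      exact mem_orthogonal_singleton_iff_inner_left.2 (congrFun hw ⟨i, hi⟩)
    have := mem_orthogonal_singleton_iff_inner_left.1 (hWw w.2)
    exact Subtype.ext (inner_self_eq_zero.1 this)
  convert (LinearMap.isClosedEmbedding_of_injective hg).isCompact_preimage
    (isCompact_univ_pi fun i : s ↦ hK i) using 1
  ext w
  simp [g]

theorem exists_forall_inner_mem_of_forall_finset (hK : ∀ i, IsCompact (K i))
    (h : ∀ s : Finset ι, ∃ y, ∀ i ∈ s, ⟪u i, y⟫ ∈ K i) : ∃ y, ∀ i, ⟪u i, y⟫ ∈ K i := by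
  classical
  obtain ⟨s₀, hs₀⟩ := exists_finset_span_image_eq_span_range u
  set W := span ℝ (u '' s₀)
  have huW : ∀ i, u i ∈ W := fun i ↦ hs₀ ▸ subset_span (mem_range_self i)
  let C : ι → Set W := fun i ↦ {w | ⟪u i, (w : V)⟫ ∈ K i}
  have hC : ∀ i, IsClosed (C i) := fun i ↦ (hK i).isClosed.preimage (by fun_prop)
  have hW : ∀ s : Finset ι, ∃ w : W, ∀ i ∈ s, w ∈ C i := by
    intro s
    obtain ⟨y, hy⟩ := h s
    refine ⟨W.orthogonalProjectionOnto y, fun i hi ↦ ?_⟩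
    change ⟪u i, W.starProjection y⟫ ∈ K i
    rw [← inner_starProjection_left_eq_right, starProjection_eq_self_iff.2 (huW i)]
    exact hy i hi
  obtain ⟨w, -, hw⟩ := (isCompact_setOf_forall_inner_mem hK).inter_iInter_nonempty C hC
    fun t ↦ by
      obtain ⟨w, hw⟩ := hW (s₀ ∪ t)
      refine ⟨w, fun i hi ↦ hw i (Finset.mem_union_left t hi), mem_iInter₂.2 fun i hi ↦ ?_⟩
      exact hw i (Finset.mem_union_right s₀ hi)
  exact ⟨w, mem_iInter.1 hw⟩

theorem exists_forall_inner_mem_of_helly (hK : ∀ i, IsCompact (K i)) (hKc : ∀ i, Convex ℝ (K i))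
    (h : ∀ s : Finset ι, s.card ≤ Module.finrank ℝ V + 1 → ∃ y, ∀ i ∈ s, ⟪u i, y⟫ ∈ K i) :
    ∃ y, ∀ i, ⟪u i, y⟫ ∈ K i := by
  refine exists_forall_inner_mem_of_forall_finset hK fun s ↦ ?_
  have := Convex.helly_theorem' (𝕜 := ℝ) (F := fun i ↦ {y : V | ⟪u i, y⟫ ∈ K i}) (s := s)
    (fun i _ ↦ (hKc i).linear_preimage (innerₛₗ ℝ (u i))) fun t _ ht ↦ by
      simpa [Set.Nonempty] using h t ht
  simpa [Set.Nonempty] using this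

end Slabs

theorem stmt_16 (d : ℕ) (o : E d) (ℐ : Set (Set (E d)))
    (hseg : ∀ I ∈ ℐ, ∃ a b : E d, I = segment ℝ a b)
    (hray : ∀ I ∈ ℐ, ∃ u : E d, u ≠ 0 ∧ I ⊆ Ray o u \ {o})
    (hHelly : ∀ 𝒦 ⊆ ℐ, 𝒦.Finite → 𝒦.ncard ≤ d + 1 →
      ∃ H : AffineSubspace ℝ (E d), IsHyperplane H ∧ o ∉ H ∧
        ∀ I ∈ 𝒦, (I ∩ (H : Set (E d))).Nonempty) :
    ∃ H : AffineSubspace ℝ (E d), IsHyperplane H ∧ o ∉ H ∧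
      ∀ I ∈ ℐ, ∃ p : E d, I ∩ (H : Set (E d)) = {p} := by
  rcases ℐ.eq_empty_or_nonempty with rfl | ⟨I₀, hI₀⟩
  · obtain ⟨H, hH, hoH, -⟩ := hHelly ∅ (empty_subset _) finite_empty (by simp)
    exact ⟨H, hH, hoH, by simp⟩
  have hslab : ∀ I : ℐ, ∃ u : E d, (I : Set (E d)) ⊆ Ray o u ∧ ∃ α β : ℝ, 0 < α ∧
      ∀ y, ((I : Set (E d)) ∩ dualHyperplane o y).Nonempty ↔ ⟪u, y⟫ ∈ Icc α β := by
    rintro ⟨I, hI⟩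
    obtain ⟨u, -, hu⟩ := hray I hI
    obtain ⟨a, b, rfl⟩ := hseg I hI
    exact ⟨u, hu.trans sdiff_subset, exists_Icc_segment_inter_dualHyperplane_nonempty_iff hu⟩
  choose u hu α β hα hslab using hslab
  obtain ⟨y, hy⟩ : ∃ y, ∀ I : ℐ, ⟪u I, y⟫ ∈ Icc (α I) (β I) := by
    refine exists_forall_inner_mem_of_helly (fun _ ↦ isCompact_Icc) (fun _ ↦ convex_Icc _ _)
      fun s hs ↦ ?_
    rw [finrank_euclideanSpace_fin] at hs
    obtain ⟨H, hH, hoH, hmeet⟩ := hHelly (Subtype.val '' (s : Set ℐ)) (by simp)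
      (s.finite_toSet.image _) ((ncard_image_le s.finite_toSet).trans (by simpa using hs))
    obtain ⟨z, hz⟩ := exists_le_dualHyperplane hH.1 hoH
    exact ⟨z, fun I hI ↦
      (hslab I z).1 ((hmeet I ⟨I, hI, rfl⟩).mono (inter_subset_inter_right _ hz))⟩
  have hy0 : y ≠ 0 := by
    rintro rfl
    exact (hα ⟨I₀, hI₀⟩).not_ge (by simpa using (hy ⟨I₀, hI₀⟩).1)
  refine ⟨dualHyperplane o y, isHyperplane_dualHyperplane o hy0, self_notMem_dualHyperplane o y,
    fun I hI ↦ exists_eq_singleton_iff_nonempty_subsingleton.2 ⟨(hslab ⟨I, hI⟩ y).2 (hy _), ?_⟩⟩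
  exact (subsingleton_ray_inter_dualHyperplane o (u ⟨I, hI⟩) y).anti
    (inter_subset_inter_left _ (hu ⟨I, hI⟩))
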